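/- For every n ≥ 3, the square of the path P_n admits a signed product cordial labeling. -/

import Mathlib

/-- Number of vertices with label `s` under labeling `α`. -/
def vCount {V : Type} [Fintype V] [DecidableEq V] (α : V → ℤ) (s : ℤ) : ℕ :=
  (Finset.univ.filter (fun v => α v = s)).card

/-- The induced edge label on an unordered pair. -/
def edgeLabel {V : Type} (α : V → ℤ) : Sym2 V → ℤ :=
  Sym2.lift ⟨fun u v => α u * α v, fun u v => mul_comm _ _⟩

/-- Number of edges of `G` with induced label `s` under vertex labeling `α`. -/
def eCount {V : Type} [Fintype V] [DecidableEq V] (G : SimpleGraph V)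
    [DecidableRel G.Adj] (α : V → ℤ) (s : ℤ) : ℕ :=
  (G.edgeFinset.filter (fun e => edgeLabel α e = s)).card

/-- `G` admits a signed product cordial labeling. -/
def IsSignedProductCordial {V : Type} [Fintype V] [DecidableEq V]
    (G : SimpleGraph V) [DecidableRel G.Adj] : Prop :=
  ∃ α : V → ℤ, (∀ v, α v = 1 ∨ α v = -1) ∧
    ((vCount α 1 : ℤ) - (vCount α (-1) : ℤ)).natAbs ≤ 1 ∧
    ((eCount G α 1 : ℤ) - (eCount G α (-1) : ℤ)).natAbs ≤ 1

/-- The splitting graph of `G`: for each vertex `v` (the `inl` copy) a new vertex `v'`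
(the `inr` copy) adjacent to exactly the neighbors of `v` in `G`. -/
def splt {V : Type} (G : SimpleGraph V) : SimpleGraph (V ⊕ V) where
  Adj x y := match x, y with
    | .inl u, .inl v => G.Adj u v
    | .inl u, .inr v => G.Adj u v
    | .inr u, .inl v => G.Adj u v
    | .inr _, .inr _ => False
  symm := ⟨by rintro (u|u) (v|v) h <;> first | exact G.adj_symm h | exact h.elim⟩
  loopless := ⟨by rintro (u|u) h; exact G.loopless.irrefl u h; exact h⟩

instance {V : Type} (G : SimpleGraph V) [DecidableRel G.Adj] :
    DecidableRel (splt G).Adj := fun x y =>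
  match x, y with
  | .inl u, .inl v => inferInstanceAs (Decidable (G.Adj u v))
  | .inl u, .inr v => inferInstanceAs (Decidable (G.Adj u v))
  | .inr u, .inl v => inferInstanceAs (Decidable (G.Adj u v))
  | .inr _, .inr _ => inferInstanceAs (Decidable False)

/-- The square of the path `Pₙ`: vertices `0,…,n-1` (for `v₁,…,vₙ`), with `i ~ j`
iff their indices differ by `1` or `2`. -/
def pathSq (n : ℕ) : SimpleGraph (Fin n) where
  Adj i j := i.val + 1 = j.val ∨ j.val + 1 = i.val ∨ i.val + 2 = j.val ∨ j.val + 2 = i.val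
  symm := ⟨by intro i j h; tauto⟩
  loopless := ⟨by intro i h; rcases h with h | h | h | h <;> omega⟩

instance (n : ℕ) : DecidableRel (pathSq n).Adj := fun i j =>
  inferInstanceAs (Decidable (_ ∨ _ ∨ _ ∨ _))

/-- The alternating labeling: vertex `vᵢ` (index `i-1`) gets `1` if `i` is odd, `-1`
if `i` is even. -/
def altLabel (n : ℕ) : Fin n → ℤ := fun i => if i.val % 2 = 0 then 1 else -1

/-! The alternating labeling `vᵢ ↦ (-1)^(i+1)` works. It splits the vertices into
`⌈n/2⌉` and `⌊n/2⌋`. An edge `vᵢvⱼ` gets label `(-1)^(i-j)`, so the `n - 1` edges of length one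
are labeled `-1` and the `n - 2` edges of length two are labeled `1`. -/

open Finset

theorem Fin.card_filter_val_eq_count (n : ℕ) (p : ℕ → Prop) [DecidablePred p] :
    #{i : Fin n | p i} = Nat.count p n := by
  rw [Nat.count_eq_card_filter_range, ← card_map Fin.valEmbedding]
  congr 1
  ext x
  simp only [mem_map, mem_filter, mem_univ, true_and, Fin.valEmbedding_apply, mem_range]
  exact ⟨by rintro ⟨i, hi, rfl⟩; exact ⟨i.2, hi⟩, fun ⟨hx, hp⟩ => ⟨⟨x, hx⟩, hp, rfl⟩⟩

lemma altLabel_eq_one_iff {n : ℕ} (i : Fin n) : altLabel n i = 1 ↔ i.val ≡ 0 [MOD 2] := by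
  simp [altLabel, Nat.ModEq]

lemma altLabel_eq_neg_one_iff {n : ℕ} (i : Fin n) : altLabel n i = -1 ↔ i.val ≡ 1 [MOD 2] := by
  simp [altLabel, Nat.ModEq]

lemma vCount_altLabel_one (n : ℕ) : vCount (altLabel n) 1 = (n + 1) / 2 := by
  simp only [vCount, altLabel_eq_one_iff]
  rw [Fin.card_filter_val_eq_count n (· ≡ 0 [MOD 2]), Nat.count_modEq_card _ two_pos]
  split_ifs <;> omega

lemma vCount_altLabel_neg_one (n : ℕ) : vCount (altLabel n) (-1) = n / 2 := by
  simp only [vCount, altLabel_eq_neg_one_iff]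
  rw [Fin.card_filter_val_eq_count n (· ≡ 1 [MOD 2]), Nat.count_modEq_card _ two_pos]
  split_ifs <;> omega

lemma edgeLabel_altLabel {n : ℕ} (a b : Fin n) :
    edgeLabel (altLabel n) s(a, b) = if a.val % 2 = b.val % 2 then 1 else -1 := by
  simp only [edgeLabel, Sym2.lift_mk, altLabel]
  split_ifs <;> first | rfl | omega

def pairsAtDistance (n k : ℕ) : Finset (Sym2 (Fin n)) :=
  univ.image fun i : Fin (n - k) => s(⟨i, by omega⟩, ⟨i + k, by omega⟩)

lemma mk_mem_pairsAtDistance {n k : ℕ} {a b : Fin n} :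
    s(a, b) ∈ pairsAtDistance n k ↔ a.val + k = b.val ∨ b.val + k = a.val := by
  simp only [pairsAtDistance, mem_image, mem_univ, true_and, Sym2.eq_iff, Fin.ext_iff]
  constructor
  · rintro ⟨i, ⟨h1, h2⟩ | ⟨h1, h2⟩⟩ <;> omega
  · rintro (h | h)
    · exact ⟨⟨a, by omega⟩, .inl ⟨rfl, h⟩⟩
    · exact ⟨⟨b, by omega⟩, .inr ⟨rfl, h⟩⟩

lemma card_pairsAtDistance (n : ℕ) {k : ℕ} (hk : 0 < k) : #(pairsAtDistance n k) = n - k := by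
  rw [pairsAtDistance, card_image_of_injective, card_univ, Fintype.card_fin]
  intro i j hij
  simp only [Sym2.eq_iff, Fin.ext_iff] at hij
  ext; omega

lemma pathSq_adj {n : ℕ} {a b : Fin n} : (pathSq n).Adj a b ↔
    a.val + 1 = b.val ∨ b.val + 1 = a.val ∨ a.val + 2 = b.val ∨ b.val + 2 = a.val :=
  Iff.rfl

lemma edgeFinset_pathSq_filter_edgeLabel_eq_one (n : ℕ) :
    {e ∈ (pathSq n).edgeFinset | edgeLabel (altLabel n) e = 1} = pairsAtDistance n 2 := by
  ext e
  induction e using Sym2.ind with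
  | _ a b =>
    simp only [mem_filter, SimpleGraph.mem_edgeFinset, SimpleGraph.mem_edgeSet, pathSq_adj,
      edgeLabel_altLabel, mk_mem_pairsAtDistance]
    split_ifs <;> simp <;> omega

lemma edgeFinset_pathSq_filter_edgeLabel_eq_neg_one (n : ℕ) :
    {e ∈ (pathSq n).edgeFinset | edgeLabel (altLabel n) e = -1} = pairsAtDistance n 1 := by
  ext e
  induction e using Sym2.ind with
  | _ a b =>
    simp only [mem_filter, SimpleGraph.mem_edgeFinset, SimpleGraph.mem_edgeSet, pathSq_adj,
      edgeLabel_altLabel, mk_mem_pairsAtDistance]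
    split_ifs <;> simp <;> omega

theorem pathSq_signedProductCordial_general (n : ℕ) :
    IsSignedProductCordial (pathSq n) := by
  refine ⟨altLabel n, fun i => by unfold altLabel; split_ifs <;> simp, ?_, ?_⟩
  · rw [vCount_altLabel_one, vCount_altLabel_neg_one]; omega
  · rw [eCount, eCount, edgeFinset_pathSq_filter_edgeLabel_eq_one,
      edgeFinset_pathSq_filter_edgeLabel_eq_neg_one, card_pairsAtDistance n two_pos,
      card_pairsAtDistance n one_pos]
    omega

/-- For every `n ≥ 3`, the square of the path `Pₙ` admits a signed
product cordial labeling. -/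
theorem pathSq_signedProductCordial (n : ℕ) (hn : 3 ≤ n) :
    IsSignedProductCordial (pathSq n) :=
  pathSq_signedProductCordial_general n
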